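/- arXiv:2002.07419 — 3 statements merged into one kernel-verified Lean document; each statement's English description precedes it below -/
import Mathlib

section
/- Fix integers w ≥ 2, l1 ≥ 1, l2 ≥ 1 with l1·(w-1) < w^{l2}, and set l = l1 + l2. For any two digit vectors M ≠ M' of length l1 with entries in {0,...,w-1}, letting B(M) = (b_1,...,b_l) and B(M') = (b'_1,...,b'_l) be their encoded vectors (message digits followed by the l2 base-w digits of the respective checksums), there exists an index i ∈ {1,...,l} such that b'_i < b_i. -/
/-- The Winternitz checksum of a digit vector `M ∈ {0,…,w-1}^{l1}`. -/
def checksum (w l1 : ℕ) (M : Fin l1 → ℕ) : ℕ := ∑ i, (w - 1 - M i)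

/-- The Winternitz encoded vector: the first `l1` entries are the digits of `M`,
the remaining entries are the base-`w` digits of the checksum of `M`. -/
def encode (w l1 : ℕ) (M : Fin l1 → ℕ) (i : ℕ) : ℕ :=
  if h : i < l1 then M ⟨i, h⟩ else checksum w l1 M / w ^ (i - l1) % w

/-- If every base-`w` digit of `b` is at most the corresponding digit of `a`,
then `b ≤ a`. -/
lemma le_of_digits_le (w : ℕ) (hw : 2 ≤ w) :
    ∀ b a : ℕ, (∀ j, b / w ^ j % w ≤ a / w ^ j % w) → b ≤ a := by
  intro b
  induction b using Nat.strong_induction_on with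
  | _ b ih =>
    intro a h
    rcases Nat.eq_zero_or_pos b with hb | hb
    · simp [hb]
    · have hw1 : 1 < w := by omega
      have hdiv : b / w < b := Nat.div_lt_self hb hw1
      have h2 : b / w ≤ a / w := by
        apply ih _ hdiv
        intro j
        have := h (j + 1)
        have e1 : b / w / w ^ j = b / w ^ (j + 1) := by
          rw [Nat.div_div_eq_div_mul, pow_succ, mul_comm]
        have e2 : a / w / w ^ j = a / w ^ (j + 1) := by
          rw [Nat.div_div_eq_div_mul, pow_succ, mul_comm]
        rw [e1, e2]; exact this
      have h0 := h 0
      simp at h0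
      have hb' := Nat.div_add_mod b w
      have ha' := Nat.div_add_mod a w
      have : w * (b / w) ≤ w * (a / w) := Nat.mul_le_mul_left w h2
      omega

/-- Key combinatorial property of the Winternitz checksum: for any two distinct
digit vectors `M ≠ M'`, some encoded digit of `M'` is strictly smaller than the
corresponding encoded digit of `M`. -/
theorem exists_encode_lt (w l1 l2 : ℕ) (hw : 2 ≤ w) (hl1 : 1 ≤ l1) (hl2 : 1 ≤ l2)
    (hbound : l1 * (w - 1) < w ^ l2)
    (M M' : Fin l1 → ℕ) (hM : ∀ i, M i < w) (hM' : ∀ i, M' i < w) (hne : M ≠ M') :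
    ∃ i < l1 + l2, encode w l1 M' i < encode w l1 M i := by
  by_cases hcase : ∃ i : Fin l1, M' i < M i
  · obtain ⟨i, hi⟩ := hcase
    refine ⟨i, by omega, ?_⟩
    simp only [encode, dif_pos i.isLt]
    simpa using hi
  · push_neg at hcase
    -- M ≤ M' pointwise, with strict inequality somewhere
    have hex : ∃ i : Fin l1, M i < M' i := by
      by_contra hc
      push_neg at hc
      exact hne (funext fun i => le_antisymm (hcase i) (hc i))
    obtain ⟨i0, hi0⟩ := hex
    have hcslt : checksum w l1 M' < checksum w l1 M := by
      unfold checksum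
      apply Finset.sum_lt_sum (fun i _ => by
        have := hcase i; omega)
      exact ⟨i0, Finset.mem_univ _, by have := hM' i0; omega⟩
    -- find a digit where checksum M' is smaller
    have hdig : ∃ j, checksum w l1 M' / w ^ j % w < checksum w l1 M / w ^ j % w := by
      by_contra hc
      push_neg at hc
      exact absurd (le_of_digits_le w hw _ _ hc) (by omega)
    obtain ⟨j, hj⟩ := hdig
    have hcs_lt : checksum w l1 M < w ^ l2 := by
      have : checksum w l1 M ≤ l1 * (w - 1) := by
        unfold checksum
        calc ∑ i, (w - 1 - M i) ≤ ∑ _i : Fin l1, (w - 1) :=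
              Finset.sum_le_sum (fun i _ => Nat.sub_le _ _)
          _ = l1 * (w - 1) := by simp [mul_comm]
      omega
    have hjl2 : j < l2 := by
      by_contra hc
      push_neg at hc
      have : checksum w l1 M < w ^ j :=
        lt_of_lt_of_le hcs_lt (Nat.pow_le_pow_right (by omega) hc)
      have : checksum w l1 M / w ^ j = 0 := Nat.div_eq_of_lt this
      simp [this] at hj
    refine ⟨l1 + j, by omega, ?_⟩
    have hnl : ¬ l1 + j < l1 := by omega
    simp only [encode, dif_neg hnl, Nat.add_sub_cancel_left]
    exact hj
end

section
/- Second-preimage-extraction soundness: let f : {0,1}^n → {0,1}^n, r = (r_1,...,r_{w-1}) ∈ ({0,1}^n)^{w-1}, and integers 0 ≤ b' < β < γ ≤ w-1. Let y_c, x_c ∈ {0,1}^n, and define modified masks r' by r'_γ = c_f^{γ-β-1}(y_c, r_{β+1, w-1}) ⊕ x_c and r'_i = r_i for i ≠ γ. Suppose σ' ∈ {0,1}^n satisfies c_{f}^{γ-b'}(σ', r'_{b'+1, w-1}) = c_{f}^{γ-β}(y_c, r'_{β+1, w-1}) and x' := c_{f}^{γ-b'-1}(σ', r'_{b'+1, w-1})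 ⊕ r'_γ ≠ x_c. Then f(x') = f(x_c), i.e. x' is a second preimage of x_c under f. -/
/-- The W-OTS⁺ chain function. -/
def chain {n : ℕ} (f : BitVec n → BitVec n) (r : ℕ → BitVec n) :
    ℕ → BitVec n → BitVec n
  | 0, x => x
  | i + 1, x => f (chain f r i x ^^^ r (i + 1))

theorem chain_congr {n : ℕ} (f : BitVec n → BitVec n) (r1 r2 : ℕ → BitVec n)
    (i : ℕ) (h : ∀ j, 1 ≤ j → j ≤ i → r1 j = r2 j) (x : BitVec n) :
    chain f r1 i x = chain f r2 i x := by
  induction i with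
  | zero => rfl
  | succ k ih =>
    simp only [chain]
    rw [ih (fun j hj1 hj2 => h j hj1 (by omega)), h (k+1) (by omega) le_rfl]

/-- Second-preimage-extraction soundness: with the SPR challenge `x_c` embedded
in the mask at position `γ` (i.e. `r'_γ = c^{γ-β-1}(y_c, r_{β+1,w-1}) ⊕ x_c`),
if the forged chain meets the honest chain at level `γ` but the extracted value
`x' = c^{γ-b'-1}(σ', r'_{b'+1,w-1}) ⊕ r'_γ` differs from `x_c`, then `x'` is a
second preimage of `x_c` under `f`. -/
theorem second_preimage_extraction {n w : ℕ} (hw : 2 ≤ w)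
    (f : BitVec n → BitVec n) (r r' : ℕ → BitVec n)
    (b' β γ : ℕ) (h1 : b' < β) (h2 : β < γ) (h3 : γ ≤ w - 1)
    (yc xc : BitVec n)
    (hr'γ : r' γ = chain f (fun j => r (β + j)) (γ - β - 1) yc ^^^ xc)
    (hr' : ∀ i, i ≠ γ → r' i = r i)
    (σ' : BitVec n)
    (hchain : chain f (fun j => r' (b' + j)) (γ - b') σ'
      = chain f (fun j => r' (β + j)) (γ - β) yc)
    (hx : chain f (fun j => r' (b' + j)) (γ - b' - 1) σ' ^^^ r' γ ≠ xc) :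
    f (chain f (fun j => r' (b' + j)) (γ - b' - 1) σ' ^^^ r' γ) = f xc := by
  have e1 : γ - b' = (γ - b' - 1) + 1 := by omega
  have e2 : γ - β = (γ - β - 1) + 1 := by omega
  rw [e1, e2] at hchain
  simp only [chain] at hchain
  have eb : b' + (γ - b' - 1 + 1) = γ := by omega
  have eβ : β + (γ - β - 1 + 1) = γ := by omega
  rw [eb, eβ] at hchain
  have hC : chain f (fun j => r' (β + j)) (γ - β - 1) yc
      = chain f (fun j => r (β + j)) (γ - β - 1) yc := by
    apply chain_congr
    intro j hj1 hj2
    exact hr' (β + j) (by omega)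
  rw [hC] at hchain
  have : chain f (fun j => r (β + j)) (γ - β - 1) yc ^^^ r' γ = xc := by
    rw [hr'γ, ← BitVec.xor_assoc, BitVec.xor_self, BitVec.zero_xor]
  rw [hchain, this]
end

section
/- Chain dichotomy: let f : {0,1}^n → {0,1}^n, r = (r_1,...,r_{w-1}) ∈ ({0,1}^n)^{w-1}, and integers 0 ≤ b' < β ≤ w-1. Let σ', y ∈ {0,1}^n and suppose the two chains agree at the top level: c_f^{w-1-b'}(σ', r_{b'+1, w-1}) = c_f^{w-1-β}(y, r_{β+1, w-1}). Then either c_f^{β-b'}(σ', r_{b'+1, w-1}) = y (the forged chain passes through y at level β), or there exist u ≠ v ∈ {0,1}^n with f(u) = f(v) (f has a collision, witnessed along the two chains at some level in {β+1,...,w-1}). -/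
/-- Chain dichotomy: if the chain started from `σ'` at level `b'` and the chain
started from `y` at level `β` agree at the top level `w - 1`, then either the
forged chain passes through `y` at level `β`, or `f` has a collision. -/
theorem chain_dichotomy {n w : ℕ} (f : BitVec n → BitVec n)
    (r : ℕ → BitVec n) (b' β : ℕ) (h1 : b' < β) (h2 : β ≤ w - 1)
    (σ' y : BitVec n)
    (h : chain f (fun j => r (b' + j)) (w - 1 - b') σ'
      = chain f (fun j => r (β + j)) (w - 1 - β) y) :
    chain f (fun j => r (b' + j)) (β - b') σ' = y ∨
      ∃ u v : BitVec n, u ≠ v ∧ f u = f v := by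
  have comp : ∀ (r' : ℕ → BitVec n) (m k : ℕ) (x : BitVec n),
      chain f r' (m + k) x = chain f (fun j => r' (m + j)) k (chain f r' m x) := by
    intro r' m k x
    induction k with
    | zero => rfl
    | succ k ih =>
      have hmk : m + (k + 1) = (m + k) + 1 := by omega
      rw [hmk]
      show f (chain f r' (m + k) x ^^^ r' (m + k + 1)) = f _
      rw [ih]
      simp only []
      congr 1
  have cancel : ∀ (r' : ℕ → BitVec n) (k : ℕ) (x z : BitVec n),
      chain f r' k x = chain f r' k z →
      x = z ∨ ∃ u v : BitVec n, u ≠ v ∧ f u = f v := by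
    intro r' k
    induction k with
    | zero => intro x z h; exact Or.inl h
    | succ k ih =>
      intro x z h
      by_cases hc : chain f r' k x ^^^ r' (k + 1) = chain f r' k z ^^^ r' (k + 1)
      · exact ih x z (by simpa [BitVec.xor_assoc] using congrArg (· ^^^ r' (k + 1)) hc)
      · exact Or.inr ⟨_, _, hc, h⟩
  have hm : w - 1 - b' = (β - b') + (w - 1 - β) := by omega
  rw [hm, comp] at h
  have hfun : (fun j => r (b' + (β - b' + j))) = fun j => r (β + j) := by
    funext j; congr 1; omega
  rw [hfun] at h
  exact cancel _ _ _ _ h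
end
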